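/- arXiv:1807.01816 — 3 statements merged into one kernel-verified Lean document; each statement's English description precedes it below -/
import Mathlib

section
/- Let δ ∈ (0,1), Π ⊆ ℝ^d nonempty closed convex, θ, z ∈ ℝ^d. Define f(z) = (1/2)δ(δ-1) dist²(Π, (z+θ)/(1-δ)) + (δ/(2(1-δ)))|z+θ|² + (1/2)|z|² and, for π ∈ ℝ^d, f(z; π) = (1/2)δ(δ-1)|π|² + δ π·θ + δ π·z + (1/2)|z|². Then f(z; π) ≤ f(z) for every π ∈ Π, with equality for π = Proj_Π((z+θ)/(1-δ)). -/
open Real Metric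
open scoped RealInnerProductSpace

/-! Completing the square with centre `c = (1 - δ)⁻¹ • (z + θ)` turns `f(z; π)` into
`½ δ (δ - 1) ‖π - c‖²` plus terms independent of `π`. Since `δ (δ - 1) < 0`, this is largest
exactly when `‖π - c‖` is smallest over `Π`, i.e. at the projection of `c`, where
`‖π - c‖ = dist(c, Π)`. -/

theorem Metric.infDist_eq_dist_of_forall_dist_le {α : Type*} [PseudoMetricSpace α]
    {s : Set α} {x y : α} (hy : y ∈ s) (hmin : ∀ q ∈ s, dist x y ≤ dist x q) :
    infDist x s = dist x y :=
  (infDist_le_dist_of_mem hy).antisymm ((le_infDist ⟨y, hy⟩).2 hmin)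

theorem half_mul_norm_sq_add_inner_eq {E : Type*} [NormedAddCommGroup E]
    [InnerProductSpace ℝ E] {δ : ℝ} (hδ : δ ≠ 1) (p w : E) :
    (1 / 2) * δ * (δ - 1) * ‖p‖ ^ 2 + δ * ⟪p, w⟫
      = (1 / 2) * δ * (δ - 1) * ‖p - (1 - δ)⁻¹ • w‖ ^ 2 + (δ / (2 * (1 - δ))) * ‖w‖ ^ 2 := by
  have h1δ : 1 - δ ≠ 0 := sub_ne_zero.2 hδ.symm
  rw [norm_sub_sq_real, real_inner_smul_right, norm_smul, mul_pow, Real.norm_eq_abs, sq_abs]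
  field_simp
  ring

theorem stmt_11_general {d : ℕ} (P : Set (EuclideanSpace ℝ (Fin d)))
    (δ : ℝ) (hδ : δ ∈ Set.Ioo (0 : ℝ) 1) (θ z : EuclideanSpace ℝ (Fin d))
    (fz : ℝ)
    (hfz : fz = (1 / 2) * δ * (δ - 1) * (Metric.infDist ((1 - δ)⁻¹ • (z + θ)) P) ^ 2
        + (δ / (2 * (1 - δ))) * ‖z + θ‖ ^ 2 + (1 / 2) * ‖z‖ ^ 2)
    (F : EuclideanSpace ℝ (Fin d) → ℝ)
    (hF : ∀ p, F p = (1 / 2) * δ * (δ - 1) * ‖p‖ ^ 2 + δ * ⟪p, θ⟫ + δ * ⟪p, z⟫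
        + (1 / 2) * ‖z‖ ^ 2)
    (pstar : EuclideanSpace ℝ (Fin d)) (hpP : pstar ∈ P)
    (hproj : ∀ p ∈ P, ‖pstar - (1 - δ)⁻¹ • (z + θ)‖ ≤ ‖p - (1 - δ)⁻¹ • (z + θ)‖) :
    (∀ p ∈ P, F p ≤ fz) ∧ F pstar = fz := by
  obtain ⟨hδ0, hδ1⟩ := hδ
  set c := (1 - δ)⁻¹ • (z + θ)
  have hF_sq : ∀ p, F p = (1 / 2) * δ * (δ - 1) * ‖p - c‖ ^ 2
      + (δ / (2 * (1 - δ))) * ‖z + θ‖ ^ 2 + (1 / 2) * ‖z‖ ^ 2 := fun p => by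
    rw [hF, ← half_mul_norm_sq_add_inner_eq hδ1.ne, inner_add_right]
    ring
  have hdist : infDist c P = ‖pstar - c‖ := by
    rw [← dist_eq_norm, dist_comm]
    refine infDist_eq_dist_of_forall_dist_le hpP fun q hq => ?_
    rw [dist_comm, dist_eq_norm, dist_comm, dist_eq_norm]
    exact hproj q hq
  have hcoef : (1 / 2) * δ * (δ - 1) ≤ 0 := by nlinarith
  refine ⟨fun p hp => ?_, by rw [hF_sq, hfz, hdist]⟩
  rw [hF_sq, hfz, hdist]
  gcongr ?_ + _ + _
  exact mul_le_mul_of_nonpos_left (pow_le_pow_left₀ (norm_nonneg _) (hproj p hp) 2) hcoef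

/-- Pointwise comparison `f(z; p) ≤ f(z)` for `p ∈ P`, with equality at the metric
projection of `(z+θ)/(1-δ)` onto `P`. -/
theorem stmt_11 {d : ℕ} (P : Set (EuclideanSpace ℝ (Fin d)))
    (hne : P.Nonempty) (hcl : IsClosed P) (hcv : Convex ℝ P)
    (δ : ℝ) (hδ : δ ∈ Set.Ioo (0 : ℝ) 1) (θ z : EuclideanSpace ℝ (Fin d))
    (fz : ℝ)
    (hfz : fz = (1 / 2) * δ * (δ - 1) * (Metric.infDist ((1 - δ)⁻¹ • (z + θ)) P) ^ 2
        + (δ / (2 * (1 - δ))) * ‖z + θ‖ ^ 2 + (1 / 2) * ‖z‖ ^ 2)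
    (F : EuclideanSpace ℝ (Fin d) → ℝ)
    (hF : ∀ p, F p = (1 / 2) * δ * (δ - 1) * ‖p‖ ^ 2 + δ * ⟪p, θ⟫ + δ * ⟪p, z⟫
        + (1 / 2) * ‖z‖ ^ 2)
    (pstar : EuclideanSpace ℝ (Fin d)) (hpP : pstar ∈ P)
    (hproj : ∀ p ∈ P, ‖pstar - (1 - δ)⁻¹ • (z + θ)‖ ≤ ‖p - (1 - δ)⁻¹ • (z + θ)‖) :
    (∀ p ∈ P, F p ≤ fz) ∧ F pstar = fz :=
  stmt_11_general P δ hδ θ z fz hfz F hF pstar hpP hproj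
end

section
/- Let N(x) = (1/√(2π)) ∫_{-∞}^x e^{-u²/2} du be the standard normal CDF, and define z(v) = e^{v²/2}((1/2)e^{-v²} + N(v) - 1) and y(v) = ∫_0^v z(u) du. Then for all v ∈ ℝ, (1/2) z'(v) - (1/2) v z(v) + (v/2) e^{-v²/2} = 1/(2√(2π)). That is, (y, z, λ = 1/(2√(2π))) solves the ergodic equation (1/2)y''(v) - (1/2)v y'(v) + (v/2)e^{-v²/2} = λ with y' = z. -/
open Real MeasureTheory intervalIntegral

/-- Second (non-admissible) solution of the ergodic equation, with constant `λ = 1/(2√(2π))`. -/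
theorem stmt_13 (N z y : ℝ → ℝ)
    (hN : ∀ x, N x = (1 / Real.sqrt (2 * Real.pi)) * ∫ u in Set.Iic x, Real.exp (-u ^ 2 / 2))
    (hz : ∀ v, z v = Real.exp (v ^ 2 / 2) * ((1 / 2) * Real.exp (-v ^ 2) + N v - 1))
    (hy : ∀ v, y v = ∫ u in (0 : ℝ)..v, z u) :
    (∀ v, HasDerivAt y (z v) v) ∧
    (∀ v, (1 / 2) * deriv z v - (1 / 2) * v * z v + (v / 2) * Real.exp (-v ^ 2 / 2)
        = 1 / (2 * Real.sqrt (2 * Real.pi))) := by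
  have hg : Continuous fun u : ℝ => Real.exp (-u ^ 2 / 2) := by continuity
  have hint : Integrable fun u : ℝ => Real.exp (-u ^ 2 / 2) := by
    have h := integrable_exp_neg_mul_sq (by norm_num : (0:ℝ) < 1/2)
    convert h using 2 with u
    ring_nf
  -- derivative of N
  have hNderiv : ∀ x, HasDerivAt N
      ((1 / Real.sqrt (2 * Real.pi)) * Real.exp (-x ^ 2 / 2)) x := by
    intro x
    have hEq : ∀ v : ℝ, N v = (1 / Real.sqrt (2 * Real.pi)) *
        ((∫ u in Set.Iic (0:ℝ), Real.exp (-u ^ 2 / 2)) +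
          ∫ u in (0:ℝ)..v, Real.exp (-u ^ 2 / 2)) := by
      intro v
      rw [hN v]
      congr 1
      rw [← integral_Iic_sub_Iic hint.integrableOn hint.integrableOn]
      ring
    have h1 : HasDerivAt (fun v => ∫ u in (0:ℝ)..v, Real.exp (-u ^ 2 / 2))
        (Real.exp (-x ^ 2 / 2)) x :=
      integral_hasDerivAt_right (hg.intervalIntegrable _ _)
        hg.stronglyMeasurable.stronglyMeasurableAtFilter hg.continuousAt
    have h2 := (h1.const_add (∫ u in Set.Iic (0:ℝ), Real.exp (-u ^ 2 / 2))).const_mul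
      (1 / Real.sqrt (2 * Real.pi))
    exact h2.congr_of_eventuallyEq (Filter.Eventually.of_forall hEq)
  -- derivative of z
  have hzderiv : ∀ v, HasDerivAt z
      (v * z v - v * Real.exp (-v ^ 2 / 2) + 1 / Real.sqrt (2 * Real.pi)) v := by
    intro v
    have hA : HasDerivAt (fun v : ℝ => Real.exp (v ^ 2 / 2))
        (Real.exp (v ^ 2 / 2) * v) v := by
      have := ((hasDerivAt_pow 2 v).div_const 2).exp
      simpa using this
    have hB : HasDerivAt (fun v : ℝ => (1 / 2) * Real.exp (-v ^ 2) + N v - 1)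
        ((1 / 2) * (Real.exp (-v ^ 2) * (-(2 * v)))
          + (1 / Real.sqrt (2 * Real.pi)) * Real.exp (-v ^ 2 / 2)) v := by
      have hb1 : HasDerivAt (fun v : ℝ => Real.exp (-v ^ 2))
          (Real.exp (-v ^ 2) * (-(2 * v))) v := by
        have := ((hasDerivAt_pow 2 v).neg).exp
        simpa using this
      exact ((hb1.const_mul (1/2)).add (hNderiv v)).sub_const 1
    have h := hA.mul hB
    have key : HasDerivAt z
        (Real.exp (v ^ 2 / 2) * v * ((1 / 2) * Real.exp (-v ^ 2) + N v - 1)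
          + Real.exp (v ^ 2 / 2) * ((1 / 2) * (Real.exp (-v ^ 2) * (-(2 * v)))
            + (1 / Real.sqrt (2 * Real.pi)) * Real.exp (-v ^ 2 / 2))) v := by
      exact h.congr_of_eventuallyEq (Filter.Eventually.of_forall hz)
    convert key using 1
    have e1 : Real.exp (v ^ 2 / 2) * Real.exp (-v ^ 2) = Real.exp (-v ^ 2 / 2) := by
      rw [← Real.exp_add]; ring_nf
    have e2 : Real.exp (v ^ 2 / 2) * Real.exp (-v ^ 2 / 2) = 1 := by
      rw [← Real.exp_add, show v ^ 2 / 2 + -v ^ 2 / 2 = 0 by ring, Real.exp_zero]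
    rw [hz v]
    linear_combination v * e1 - (1 / Real.sqrt (2 * Real.pi)) * e2
  constructor
  · intro v
    have hzc : Continuous z :=
      continuous_iff_continuousAt.2 fun v => (hzderiv v).differentiableAt.continuousAt
    have h1 : HasDerivAt (fun w => ∫ u in (0:ℝ)..w, z u) (z v) v :=
      integral_hasDerivAt_right (hzc.intervalIntegrable _ _)
        hzc.stronglyMeasurable.stronglyMeasurableAtFilter hzc.continuousAt
    exact h1.congr_of_eventuallyEq (Filter.Eventually.of_forall hy)
  · intro v
    rw [(hzderiv v).deriv]
    have h2pi : (0:ℝ) < Real.sqrt (2 * Real.pi) :=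
      Real.sqrt_pos.2 (by positivity)
    field_simp
    ring
end

section
/- Let m ≥ 1 and for i = 1,…,m let y^i, ȳ^i : [0,T] → ℝ be C¹ functions satisfying (y^i)'(t) = -[F^i(t, y^i(t), y^{-i}(t))] and (ȳ^i)'(t) = -[F̄^i(t, ȳ^i(t), ȳ^{-i}(t))], with y^i(T) ≤ ȳ^i(T). Assume each F^i(t, ·) is Lipschitz, nondecreasing in y^k for every k ≠ i, and F^i(t, ȳ^i(t), ȳ^{-i}(t)) ≤ F̄^i(t, ȳ^i(t), ȳ^{-i}(t)) for all t. Then y^i(t) ≤ ȳ^i(t) for all t ∈ [0,T] and all i. -/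
/-!
Compare through the energy `φ t = ∑ i ((y i t - ybar i t)⁺)²`, which vanishes at `T`. Where
`y i > ybar i`, quasi-monotonicity allows raising the other coordinates of `y` to `y ⊔ ybar`
without decreasing `F i`; then the Lipschitz bound and the driver comparison along `ybar` give
`F i y - Fbar i ybar ≤ C ∑ k (y k - ybar k)⁺`. By Cauchy–Schwarz this yields
`φ' ≥ -2 C m φ`, and a backward Grönwall argument forces `φ = 0` on `[0, T]`.
-/

open Real Set Finset

lemma hasDerivAt_posPart_sq (x : ℝ) : HasDerivAt (fun x : ℝ => x⁺ ^ 2) (2 * x⁺) x := by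
  rcases lt_trichotomy x 0 with hx | rfl | hx
  · have hzero : (fun x : ℝ => x⁺ ^ 2) =ᶠ[nhds x] fun _ => 0 := by
      filter_upwards [Iio_mem_nhds hx] with z (hz : z < 0)
      simp [posPart_eq_zero.2 hz.le]
    simpa [posPart_eq_zero.2 hx.le] using (hasDerivAt_const x (0 : ℝ)).congr_of_eventuallyEq hzero
  · have hleft : HasDerivWithinAt (fun x : ℝ => x⁺ ^ 2) 0 (Iic 0) 0 :=
      (hasDerivWithinAt_const 0 _ (0 : ℝ)).congr
        (fun z (hz : z ≤ 0) => by simp [posPart_eq_zero.2 hz]) (by simp)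
    have hright : HasDerivWithinAt (fun x : ℝ => x⁺ ^ 2) 0 (Ici 0) 0 :=
      ((hasDerivAt_pow 2 (0 : ℝ)).hasDerivWithinAt.congr
        (fun z (hz : 0 ≤ z) => by simp [posPart_eq_self.2 hz]) (by simp)).congr_deriv (by simp)
    simpa [Iic_union_Ici] using hleft.union hright
  · have hid : (fun x : ℝ => x⁺ ^ 2) =ᶠ[nhds x] fun z => z ^ 2 := by
      filter_upwards [Ioi_mem_nhds hx] with z (hz : 0 < z)
      simp [posPart_eq_self.2 hz.le]
    simpa [posPart_eq_self.2 hx.le] using (hasDerivAt_pow 2 x).congr_of_eventuallyEq hid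

lemma sum_posPart_sq_nonpos_iff {ι : Type*} [Fintype ι] (d : ι → ℝ) :
    ∑ i, (d i)⁺ ^ 2 ≤ 0 ↔ ∀ i, d i ≤ 0 := by
  rw [(sum_nonneg fun i _ => sq_nonneg _).ge_iff_eq',
    sum_eq_zero_iff_of_nonneg fun i _ => sq_nonneg _]
  simp [posPart_eq_zero]

lemma hasDerivWithinAt_sum_posPart_sq {ι : Type*} [Fintype ι] {d : ι → ℝ → ℝ} {d' : ι → ℝ}
    {s : Set ℝ} {t : ℝ} (hd : ∀ i, HasDerivWithinAt (d i) (d' i) s t) :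
    HasDerivWithinAt (fun t => ∑ i, (d i t)⁺ ^ 2) (∑ i, 2 * (d i t)⁺ * d' i) s t :=
  HasDerivWithinAt.fun_sum fun i _ =>
    ((hasDerivAt_posPart_sq (d i t)).comp_hasDerivWithinAt t (hd i)).congr_deriv (by ring)

-- `exp (K t) * φ t` is nondecreasing, hence bounded by its value at `b`.
lemma nonpos_of_neg_mul_le_deriv_of_nonpos_right {φ φ' : ℝ → ℝ} {K a b : ℝ}
    (hφ : ∀ t ∈ Icc a b, HasDerivWithinAt φ (φ' t) (Icc a b) t)
    (hbound : ∀ t ∈ Icc a b, -(K * φ t) ≤ φ' t) (hb : φ b ≤ 0) :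
    ∀ t ∈ Icc a b, φ t ≤ 0 := by
  set g : ℝ → ℝ := fun t => exp (K * t) * φ t
  have hg : ∀ t ∈ Icc a b,
      HasDerivWithinAt g (exp (K * t) * (K * φ t + φ' t)) (Icc a b) t := fun t ht =>
    (((hasDerivAt_id t).const_mul K).exp.hasDerivWithinAt.mul (hφ t ht)).congr_deriv (by simp; ring)
  have hmono : MonotoneOn g (Icc a b) := by
    refine monotoneOn_of_hasDerivWithinAt_nonneg (f' := fun t => exp (K * t) * (K * φ t + φ' t))
      (convex_Icc a b)
      (fun t ht => (hg t ht).continuousWithinAt) (fun t ht => ?_) (fun t ht => ?_)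
    · exact (hg t (interior_subset ht)).mono interior_subset
    · have := hbound t (interior_subset ht)
      exact mul_nonneg (exp_pos _).le (by linarith)
  intro t ht
  have hbmem : b ∈ Icc a b := ⟨ht.1.trans ht.2, le_rfl⟩
  have hgt : g t ≤ g b := hmono ht hbmem ht.2
  have hgb : g b ≤ 0 := mul_nonpos_of_nonneg_of_nonpos (exp_pos _).le hb
  exact nonpos_of_mul_nonpos_right (hgt.trans hgb) (exp_pos _)

lemma sub_le_mul_sum_posPart_of_quasiMonotone {ι : Type*} [Fintype ι]
    {f fbar : (ι → ℝ) → ℝ} {C : ℝ} {i : ι} {u v : ι → ℝ}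
    (hLip : ∀ u v : ι → ℝ, |f u - f v| ≤ C * ∑ k, |u k - v k|)
    (hmono : ∀ u v : ι → ℝ, u i = v i → u ≤ v → f u ≤ f v)
    (hcomp : f v ≤ fbar v) (hi : v i ≤ u i) :
    f u - fbar v ≤ C * ∑ k, (u k - v k)⁺ := by
  have hsup : f u ≤ f (u ⊔ v) := hmono _ _ (by simp [hi]) le_sup_left
  have hdist : ∀ k, |(u ⊔ v) k - v k| = (u k - v k)⁺ := fun k => by
    rcases le_total (u k) (v k) with h | h
    · simp [h]
    · simp [h, abs_of_nonneg (sub_nonneg.2 h)]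
  calc f u - fbar v ≤ f (u ⊔ v) - f v := by linarith
    _ ≤ |f (u ⊔ v) - f v| := le_abs_self _
    _ ≤ C * ∑ k, (u k - v k)⁺ := by simpa only [hdist] using hLip (u ⊔ v) v

lemma neg_mul_sum_posPart_sq_le {ι : Type*} [Fintype ι] (d g : ι → ℝ) {C : ℝ} (hC : 0 ≤ C)
    (hg : ∀ i, 0 < d i → -(C * ∑ k, (d k)⁺) ≤ g i) :
    -(2 * C * Fintype.card ι * ∑ i, (d i)⁺ ^ 2) ≤ ∑ i, 2 * (d i)⁺ * g i := by
  set S := ∑ k, (d k)⁺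
  have hterm : ∀ i, -(2 * C * S) * (d i)⁺ ≤ 2 * (d i)⁺ * g i := fun i => by
    rcases le_or_gt (d i) 0 with h | h
    · simp [posPart_eq_zero.2 h]
    · nlinarith [hg i h, posPart_nonneg (d i)]
  have hCS : S ^ 2 ≤ Fintype.card ι * ∑ i, (d i)⁺ ^ 2 := sq_sum_le_card_mul_sum_sq
  calc -(2 * C * Fintype.card ι * ∑ i, (d i)⁺ ^ 2) ≤ -(2 * C * S) * S := by nlinarith
    _ = ∑ i, -(2 * C * S) * (d i)⁺ := mul_sum _ _ _
    _ ≤ ∑ i, 2 * (d i)⁺ * g i := sum_le_sum fun i _ => hterm i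

theorem stmt_18_general (m : ℕ) (T : ℝ)
    (y ybar : Fin m → ℝ → ℝ)
    (F Fbar : Fin m → ℝ → (Fin m → ℝ) → ℝ)
    (Cg : ℝ)
    (hLip : ∀ i t, t ∈ Set.Icc (0 : ℝ) T → ∀ u v : Fin m → ℝ,
      |F i t u - F i t v| ≤ Cg * ∑ k, |u k - v k|)
    (hmono : ∀ i t, t ∈ Set.Icc (0 : ℝ) T → ∀ u v : Fin m → ℝ,
      u i = v i → (∀ k, u k ≤ v k) → F i t u ≤ F i t v)
    (hy : ∀ i, ∀ t ∈ Set.Icc (0 : ℝ) T,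
      HasDerivWithinAt (y i) (-(F i t fun k => y k t)) (Set.Icc 0 T) t)
    (hybar : ∀ i, ∀ t ∈ Set.Icc (0 : ℝ) T,
      HasDerivWithinAt (ybar i) (-(Fbar i t fun k => ybar k t)) (Set.Icc 0 T) t)
    (hterm : ∀ i, y i T ≤ ybar i T)
    (hcomp : ∀ i, ∀ t ∈ Set.Icc (0 : ℝ) T,
      F i t (fun k => ybar k t) ≤ Fbar i t fun k => ybar k t) :
    ∀ i, ∀ t ∈ Set.Icc (0 : ℝ) T, y i t ≤ ybar i t := by
  have hLipPos : ∀ i t, t ∈ Icc 0 T → ∀ u v : Fin m → ℝ,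
      |F i t u - F i t v| ≤ Cg⁺ * ∑ k, |u k - v k| := fun i t ht u v =>
    (hLip i t ht u v).trans <|
      mul_le_mul_of_nonneg_right (le_posPart Cg) (sum_nonneg fun _ _ => abs_nonneg _)
  have hφ : ∀ t ∈ Icc 0 T, HasDerivWithinAt (fun t => ∑ i, (y i t - ybar i t)⁺ ^ 2)
      (∑ i, 2 * (y i t - ybar i t)⁺ * (-(F i t fun k => y k t) - -(Fbar i t fun k => ybar k t)))
      (Icc 0 T) t := fun t ht =>
    hasDerivWithinAt_sum_posPart_sq fun i => (hy i t ht).sub (hybar i t ht)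
  have hbound : ∀ t ∈ Icc 0 T, -((2 * Cg⁺ * m) * ∑ i, (y i t - ybar i t)⁺ ^ 2) ≤
      ∑ i, 2 * (y i t - ybar i t)⁺ * (-(F i t fun k => y k t) - -(Fbar i t fun k => ybar k t)) := by
    intro t ht
    simpa using neg_mul_sum_posPart_sq_le (fun i => y i t - ybar i t) _ (posPart_nonneg Cg)
      fun i hi => by
        have hgap := sub_le_mul_sum_posPart_of_quasiMonotone (u := fun k => y k t)
          (hLipPos i t ht) (hmono i t ht) (hcomp i t ht) (sub_pos.1 hi).le
        linarith
  have hφT := (sum_posPart_sq_nonpos_iff _).2 fun i => sub_nonpos.2 (hterm i)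
  intro i t ht
  exact sub_nonpos.1 <| (sum_posPart_sq_nonpos_iff _).1
    (nonpos_of_neg_mul_le_deriv_of_nonpos_right hφ hbound hφT t ht) i

/-- Deterministic (ODE) multidimensional comparison theorem: quasi-monotone drivers,
terminal comparison, and driver comparison along the solution `ȳ` imply `y ≤ ȳ`. -/
theorem stmt_18 (m : ℕ) (hm : 1 ≤ m) (T : ℝ) (hT : 0 < T)
    (y ybar : Fin m → ℝ → ℝ)
    (F Fbar : Fin m → ℝ → (Fin m → ℝ) → ℝ)
    (Cg : ℝ)
    (hLip : ∀ i t, t ∈ Set.Icc (0 : ℝ) T → ∀ u v : Fin m → ℝ,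
      |F i t u - F i t v| ≤ Cg * ∑ k, |u k - v k|)
    (hmono : ∀ i t, t ∈ Set.Icc (0 : ℝ) T → ∀ u v : Fin m → ℝ,
      u i = v i → (∀ k, u k ≤ v k) → F i t u ≤ F i t v)
    (hy : ∀ i, ∀ t ∈ Set.Icc (0 : ℝ) T,
      HasDerivWithinAt (y i) (-(F i t fun k => y k t)) (Set.Icc 0 T) t)
    (hybar : ∀ i, ∀ t ∈ Set.Icc (0 : ℝ) T,
      HasDerivWithinAt (ybar i) (-(Fbar i t fun k => ybar k t)) (Set.Icc 0 T) t)
    (hterm : ∀ i, y i T ≤ ybar i T)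
    (hcomp : ∀ i, ∀ t ∈ Set.Icc (0 : ℝ) T,
      F i t (fun k => ybar k t) ≤ Fbar i t fun k => ybar k t) :
    ∀ i, ∀ t ∈ Set.Icc (0 : ℝ) T, y i t ≤ ybar i t :=
  stmt_18_general m T y ybar F Fbar Cg hLip hmono hy hybar hterm hcomp
end
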